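/- For every parameter tuple (h,j,k,ℓ) with ℓ ∈ {0,1}, k ∈ {0,…,q_0−1}, j ∈ {0,…,q_0−1}, and max{1, m_{j,k,ℓ}} ≤ h ≤ 2q_0, there exists a nonnegative integer i such that all four of the following hold: (1) iq + ℓ + k − 2hq_0 ≥ 0; (2) 2iq_0 + jq − h ≥ 0; (3) (h−ℓ−k−i−j)(q+q_0) + (h−j−k−i)(q_0+1) ≥ 0; (4) hq − (ℓ+2k)q_0 − j > 0. -/

import Mathlib

/-!
Clearing the ceiling in `h ≥ m_{j,k,ℓ}` and using `q₀(k+ℓ) < q` gives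
`q₀(j+k+ℓ) ≤ h(q₀−1)`. Hence `h ≥ j+k+ℓ+1`, and even `h ≥ j+k+ℓ+2` once `h > q₀`.
Take `i = 1` if `h ≤ q₀` and `i = 2` otherwise, so that `h ≤ iq₀` and `j+k+ℓ+i ≤ h`:
the first two inequalities follow from `h ≤ iq₀`, and the third expression equals
`(h−j−k−ℓ−i)(q+2q₀+1) + ℓ(q₀+1)`.
-/

/-- `q₀ = 2^s`. -/
def q0 (s : ℕ) : ℕ := 2 ^ s

/-- `q = 2 q₀²`. -/
def qS (s : ℕ) : ℕ := 2 * q0 s ^ 2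

/-- `m_{j,k,ℓ} = ⌈(q₀/(q₀−1))·(j + k + ℓ − (k+ℓ)/q)⌉`. -/
def mval (s j k l : ℕ) : ℤ :=
  ⌈((q0 s : ℚ) / ((q0 s : ℚ) - 1)) *
    ((j : ℚ) + (k : ℚ) + (l : ℚ) - ((k : ℚ) + (l : ℚ)) / (qS s : ℚ))⌉

/-- `F₁ = { hq − (ℓ+2k)q₀ − j : ℓ ∈ {0,1}, k,j ∈ {0,…,q₀−1},
    h ∈ {max{1, m_{j,k,ℓ}},…,2q₀} }`. -/
def F1 (s : ℕ) : Set ℕ :=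
  {n | ∃ h j k l : ℕ, l ≤ 1 ∧ k < q0 s ∧ j < q0 s ∧
    max 1 (mval s j k l) ≤ (h : ℤ) ∧ h ≤ 2 * q0 s ∧
    n = h * qS s - (l + 2 * k) * q0 s - j}

/-- `F₂ = { hq − (2h−2q₀−1)q₀ − (q₀−1) : h ∈ {q₀+1,…,2q₀} }`. -/
def F2 (s : ℕ) : Set ℕ :=
  {n | ∃ h : ℕ, q0 s + 1 ≤ h ∧ h ≤ 2 * q0 s ∧
    n = h * qS s - (2 * h - 2 * q0 s - 1) * q0 s - (q0 s - 1)}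

/-- `G₁ = { hq − kq₀ − ⌊(2h−k−2)/2⌋ : h ∈ {1,…,q₀}, k ∈ {0,…,2h−2} }`. -/
def G1 (s : ℕ) : Set ℕ :=
  {n | ∃ h k : ℕ, 1 ≤ h ∧ h ≤ q0 s ∧ k ≤ 2 * h - 2 ∧
    n = h * qS s - k * q0 s - (2 * h - k - 2) / 2}

lemma two_le_q0 {s : ℕ} (hs : 1 ≤ s) : 2 ≤ q0 s := by
  simpa [q0] using Nat.pow_le_pow_right two_pos hs

lemma natCast_qS (s : ℕ) : (qS s : ℤ) = 2 * (q0 s : ℤ) ^ 2 := by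
  simp [qS]

lemma q0_mul_lt_qS {s k l : ℕ} (hs : 1 ≤ s) (hkl : k + l ≤ q0 s) : q0 s * (k + l) < qS s := by
  have := two_le_q0 hs
  unfold qS
  nlinarith [Nat.mul_le_mul_left (q0 s) hkl]

lemma mul_sum_le_of_ceil_le {Q q j k l : ℕ} {h : ℤ} (hQ : 1 < Q) (hq : Q * (k + l) < q)
    (hceil : ⌈((Q : ℚ) / ((Q : ℚ) - 1)) *
      ((j : ℚ) + (k : ℚ) + (l : ℚ) - ((k : ℚ) + (l : ℚ)) / (q : ℚ))⌉ ≤ h) :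
    (Q : ℤ) * (j + k + l) ≤ h * (Q - 1) := by
  have hQ' : (0 : ℚ) < Q - 1 := by
    rw [sub_pos]; exact_mod_cast hQ
  have hq' : (0 : ℚ) < q := by
    exact_mod_cast Nat.zero_lt_of_lt hq
  have hle := Int.ceil_le.mp hceil
  rw [div_mul_eq_mul_div, div_le_iff₀ hQ'] at hle
  have hcleared : (Q : ℚ) * (q * (j + k + l) - (k + l)) ≤ h * (Q - 1) * q := by
    calc (Q : ℚ) * (q * (j + k + l) - (k + l))
        = Q * (j + k + l - (k + l) / q) * q := by field_simp
      _ ≤ h * (Q - 1) * q := mul_le_mul_of_nonneg_right hle hq'.le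
  have hint : (Q : ℤ) * (q * (j + k + l) - (k + l)) ≤ h * (Q - 1) * q := by
    exact_mod_cast hcleared
  have hq'' : (Q : ℤ) * (k + l) < q := by exact_mod_cast hq
  -- `q * (Q * (j + k + l) - h * (Q - 1)) ≤ Q * (k + l) < q`
  nlinarith

lemma add_one_le_of_mul_le_mul_pred {Q S h : ℤ} (hQ : 1 ≤ Q) (hS : 0 ≤ S) (hh : 1 ≤ h)
    (hQSh : Q * S ≤ h * (Q - 1)) : S + 1 ≤ h := by
  rcases hS.eq_or_lt with rfl | hS
  · simpa using hh
  · by_contra! hhS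
    nlinarith [mul_le_mul_of_nonneg_right (by omega : h ≤ S) (sub_nonneg.mpr hQ)]

lemma add_two_le_of_mul_le_mul_pred {Q S h : ℤ} (hQ : 1 ≤ Q) (hQh : Q < h)
    (hQSh : Q * S ≤ h * (Q - 1)) : S + 2 ≤ h := by
  by_contra! hhS
  nlinarith [mul_le_mul_of_nonneg_right (by omega : h ≤ S + 1) (sub_nonneg.mpr hQ)]

lemma inequalities_of_le_mul_of_add_le {Q h i j k l : ℤ} (hQ : 0 ≤ Q)
    (hj : 0 ≤ j) (hk : 0 ≤ k) (hl : 0 ≤ l) (hkQ : k < Q) (hh : 1 ≤ h)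
    (hhi : h ≤ i * Q) (hi : j + k + l + i ≤ h) :
    i * (2 * Q ^ 2) + l + k - 2 * h * Q ≥ 0 ∧
      2 * i * Q + j * (2 * Q ^ 2) - h ≥ 0 ∧
      (h - l - k - i - j) * (2 * Q ^ 2 + Q) + (h - j - k - i) * (Q + 1) ≥ 0 ∧
      h * (2 * Q ^ 2) - (l + 2 * k) * Q - j > 0 := by
  refine ⟨?_, ?_, ?_, ?_⟩
  · nlinarith [mul_le_mul_of_nonneg_right hhi hQ]
  · nlinarith [mul_nonneg hj (sq_nonneg Q)]
  · have hsplit : (h - l - k - i - j) * (2 * Q ^ 2 + Q) + (h - j - k - i) * (Q + 1)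
        = (h - (j + k + l) - i) * (2 * Q ^ 2 + 2 * Q + 1) + l * (Q + 1) := by ring
    rw [hsplit]
    have := mul_nonneg (sub_nonneg.mpr hi) (by positivity : (0 : ℤ) ≤ 2 * Q ^ 2 + 2 * Q + 1)
    nlinarith
  · nlinarith [mul_le_mul_of_nonneg_right hkQ.le hQ]

theorem stmt16_general (s : ℕ) (hs : 1 ≤ s) (h j k l : ℕ)
    (hl : l ≤ 1) (hk : k < q0 s)
    (hhm : max 1 (mval s j k l) ≤ (h : ℤ)) (hh : h ≤ 2 * q0 s) :
    ∃ i : ℕ,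
      (i : ℤ) * qS s + l + k - 2 * h * q0 s ≥ 0 ∧
      2 * (i : ℤ) * q0 s + (j : ℤ) * qS s - h ≥ 0 ∧
      ((h : ℤ) - l - k - i - j) * (qS s + q0 s)
        + ((h : ℤ) - j - k - i) * (q0 s + 1) ≥ 0 ∧
      (h : ℤ) * qS s - ((l : ℤ) + 2 * k) * q0 s - j > 0 := by
  have hQ := two_le_q0 hs
  have hh1 : 1 ≤ (h : ℤ) := le_of_max_le_left hhm
  have hQSh : (q0 s : ℤ) * (j + k + l) ≤ h * (q0 s - 1) :=
    mul_sum_le_of_ceil_le hQ (q0_mul_lt_qS hs (by omega)) (le_of_max_le_right hhm)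
  obtain ⟨i, hhi, hi⟩ : ∃ i : ℕ, (h : ℤ) ≤ i * q0 s ∧ (j + k + l + i : ℤ) ≤ h := by
    by_cases hhQ : h ≤ q0 s
    · exact ⟨1, by push_cast; omega,
        by exact_mod_cast add_one_le_of_mul_le_mul_pred (by omega) (by positivity) hh1 hQSh⟩
    · exact ⟨2, by push_cast; omega,
        by exact_mod_cast add_two_le_of_mul_le_mul_pred (by omega) (by omega) hQSh⟩
  rw [natCast_qS]
  exact ⟨i, inequalities_of_le_mul_of_add_le (by positivity) (by positivity) (by positivity)
    (by positivity) (by exact_mod_cast hk) hh1 hhi hi⟩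

/-- For every admissible `(h,j,k,ℓ)` there is a nonnegative integer `i`
satisfying the system of inequalities (10) of the paper. -/
theorem stmt16 (s : ℕ) (hs : 1 ≤ s) (h j k l : ℕ)
    (hl : l ≤ 1) (hk : k < q0 s) (hj : j < q0 s)
    (hhm : max 1 (mval s j k l) ≤ (h : ℤ)) (hh : h ≤ 2 * q0 s) :
    ∃ i : ℕ,
      (i : ℤ) * qS s + l + k - 2 * h * q0 s ≥ 0 ∧
      2 * (i : ℤ) * q0 s + (j : ℤ) * qS s - h ≥ 0 ∧
      ((h : ℤ) - l - k - i - j) * (qS s + q0 s)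
        + ((h : ℤ) - j - k - i) * (q0 s + 1) ≥ 0 ∧
      (h : ℤ) * qS s - ((l : ℤ) + 2 * k) * q0 s - j > 0 :=
  stmt16_general s hs h j k l hl hk hhm hh
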